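/- arXiv:math/0011147 — 6 statements merged into one kernel-verified Lean document; each statement's English description precedes it below -/
import Mathlib

section
/- Let U be a k-vector space and let A be a 2×2 matrix with entries a₁₁, a₁₂, a₂₁, a₂₂ ∈ U such that the span of the four entries is 3-dimensional, and such that no nontrivial linear combination of the two columns of A has the form (λ₁·v, λ₂·v) for a single vector v ∈ U and scalars λ₁, λ₂. Then there exists g ∈ GL₂(k) and linearly independent vectors e₁, e₂, e₃ ∈ U such that A·g = [[e₁, e₂],[e₃, e₁]]. -/
/-!
The four entries span a 3-dimensional space, so they satisfy a nontrivial linear relation, which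
can be written as `w(r₀)₀ = w(r₁)₁`, where `w(c)` denotes the generalized column with
coefficients `c`. If `r₀` and `r₁` were both multiples of one vector `c`, the relation would make
the two entries of `w(c)` linearly dependent, i.e. `w(c) = (λ₁ v, λ₂ v)`. Hence the matrix `g`
with columns `r₀, r₁` is invertible, `A g = [[e₁, e₂], [e₃, e₁]]` with `e₁ = w(r₀)₀ = w(r₁)₁`, and
since `A g` has the same entry span as `A`, the vectors `e₁, e₂, e₃` span a 3-dimensional space.
-/

open Module Submodule Set Function Matrix

section LinearIndependence

variable {K V : Type*} [Field K] [AddCommGroup V] [Module K V]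

theorem exists_smul_eq_of_not_linearIndependent_fin_two {f : Fin 2 → V}
    (h : ¬LinearIndependent K f) : ∃ (v : V) (a b : K), f 0 = a • v ∧ f 1 = b • v := by
  rw [show f = ![f 0, f 1] from (FinVec.etaExpand_eq f).symm] at h
  by_cases hf : f 0 = 0
  · exact ⟨f 1, 0, 1, by simp [hf], by simp⟩
  · obtain ⟨a, ha⟩ : ∃ a : K, a • f 0 = f 1 := by simpa [LinearIndependent.pair_iff' hf] using h
    exact ⟨f 0, 1, a, by simp, ha.symm⟩

theorem linearIndependent_of_le_span_range {ι : Type*} [Fintype ι] {e : ι → V}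
    {W : Submodule K V} (hW : W ≤ span K (range e)) (hcard : Fintype.card ι ≤ finrank K W) :
    LinearIndependent K e := by
  have := Module.Finite.span_of_finite K (finite_range e)
  rw [linearIndependent_iff_card_eq_finrank_span]
  exact le_antisymm (hcard.trans (Submodule.finrank_mono hW)) (finrank_range_le_card e)

end LinearIndependence

section ColumnOperation

variable {k U : Type*} [CommSemiring k] [AddCommMonoid U] [Module k U]
  {m n p q : Type*} [Fintype n]

def colOp (A : Matrix m n U) (g : Matrix n p k) : Matrix m p U :=
  of fun i j => ∑ l, g l j • A i l

theorem linearCombination_col_apply (A : Matrix m n U) (c : n → k) (i : m) :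
    Fintype.linearCombination k A.col c i = ∑ j, c j • A i j := by
  rw [Fintype.linearCombination_apply, Finset.sum_apply]
  rfl

theorem colOp_apply (A : Matrix m n U) (g : Matrix n p k) (i : m) (j : p) :
    colOp A g i j = Fintype.linearCombination k A.col (g.col j) i := by
  rw [linearCombination_col_apply]
  rfl

theorem colOp_colOp [Fintype p] (A : Matrix m n U) (g : Matrix n p k) (h : Matrix p q k) :
    colOp (colOp A g) h = colOp A (g * h) := by
  ext i j
  simp only [colOp, of_apply, mul_apply, Finset.smul_sum, Finset.sum_smul, smul_smul]
  rw [Finset.sum_comm]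
  simp_rw [mul_comm]

theorem colOp_one [DecidableEq n] (A : Matrix m n U) : colOp A (1 : Matrix n n k) = A := by
  ext i j
  simp [colOp, one_apply]

theorem span_range_colOp_le (A : Matrix m n U) (g : Matrix n p k) :
    span k (range (uncurry (colOp A g))) ≤ span k (range (uncurry A)) := by
  rw [span_le]
  rintro _ ⟨⟨i, j⟩, rfl⟩
  exact sum_mem fun l _ => smul_mem _ _ (subset_span ⟨(i, l), rfl⟩)

theorem span_range_le_colOp_of_isUnit [DecidableEq n] (A : Matrix m n U) {g : Matrix n n k}
    (hg : IsUnit g) : span k (range (uncurry A)) ≤ span k (range (uncurry (colOp A g))) := by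
  obtain ⟨g', hgg'⟩ := hg.exists_right_inv
  calc span k (range (uncurry A))
      = span k (range (uncurry (colOp (colOp A g) g'))) := by rw [colOp_colOp, hgg', colOp_one]
    _ ≤ span k (range (uncurry (colOp A g))) := span_range_colOp_le _ _

end ColumnOperation

section TwoByTwo

variable {k U : Type*} [Field k] [AddCommGroup U] [Module k U]

theorem range_uncurry_fin_two {α : Type*} (A : Matrix (Fin 2) (Fin 2) α) :
    range (uncurry A) = {A 0 0, A 0 1, A 1 0, A 1 1} := by
  ext x
  simp [Fin.exists_fin_two, eq_comm, or_assoc, uncurry]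

theorem exists_relation_of_not_linearIndependent {A : Matrix (Fin 2) (Fin 2) U}
    (h : ¬LinearIndependent k (uncurry A)) :
    ∃ R : Matrix (Fin 2) (Fin 2) k, R ≠ 0 ∧
      Fintype.linearCombination k A.col (R 0) 0 = Fintype.linearCombination k A.col (R 1) 1 := by
  obtain ⟨f, hf, ⟨i, j⟩, hij⟩ := Fintype.not_linearIndependent_iff.1 h
  refine ⟨!![f (0, 0), f (0, 1); -f (1, 0), -f (1, 1)], fun hR => hij ?_, ?_⟩
  · have := congrFun (congrFun hR i) j
    fin_cases i <;> fin_cases j <;> simpa using this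
  · simp only [linearCombination_col_apply, Fintype.sum_prod_type, Fin.sum_univ_two,
      uncurry] at hf ⊢
    simp only [of_apply, cons_val_zero, cons_val_one, neg_smul]
    linear_combination (norm := module) hf

theorem linearIndependent_rows_of_relation {A : Matrix (Fin 2) (Fin 2) U}
    (hcol : ∀ c : Fin 2 → k, c ≠ 0 → LinearIndependent k (Fintype.linearCombination k A.col c))
    {R : Matrix (Fin 2) (Fin 2) k} (hR : R ≠ 0)
    (hrel : Fintype.linearCombination k A.col (R 0) 0 = Fintype.linearCombination k A.col (R 1) 1) :
    LinearIndependent k R.row := by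
  by_contra hdep
  obtain ⟨c, a, b, h0, h1⟩ : ∃ (c : Fin 2 → k) (a b : k), R 0 = a • c ∧ R 1 = b • c :=
    exists_smul_eq_of_not_linearIndependent_fin_two hdep
  have hRab : R = fun i => ![a, b] i • c := by
    ext i : 1
    fin_cases i <;> simp [h0, h1]
  have hc : c ≠ 0 := by
    rintro rfl
    exact hR (by ext i j; simp [hRab])
  have hpair := hcol c hc
  rw [show Fintype.linearCombination k A.col c = ![Fintype.linearCombination k A.col c 0,
    Fintype.linearCombination k A.col c 1] from (FinVec.etaExpand_eq _).symm,
    LinearIndependent.pair_iff] at hpair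
  obtain ⟨rfl, hb⟩ := hpair a (-b) (by
    rw [h0, h1, map_smul, map_smul] at hrel
    rw [neg_smul, ← sub_eq_add_neg, sub_eq_zero]
    exact hrel)
  rw [neg_eq_zero] at hb
  subst hb
  exact hR (by ext i j; fin_cases i <;> simp [hRab])

end TwoByTwo

theorem span3_normal_form_general
    {k U : Type} [Field k]
    [AddCommGroup U] [Module k U]
    (A : Matrix (Fin 2) (Fin 2) U)
    (hspan : Module.finrank k (Submodule.span k {A 0 0, A 0 1, A 1 0, A 1 1}) = 3)
    (hcol : ∀ c : Fin 2 → k, c ≠ 0 →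
      ¬ ∃ (v : U) (l₁ l₂ : k),
          c 0 • A 0 0 + c 1 • A 0 1 = l₁ • v ∧ c 0 • A 1 0 + c 1 • A 1 1 = l₂ • v) :
    ∃ (g : GL (Fin 2) k) (e₁ e₂ e₃ : U), LinearIndependent k ![e₁, e₂, e₃] ∧
      (Matrix.of fun i j => ∑ l : Fin 2, ((g : Matrix (Fin 2) (Fin 2) k) l j) • A i l)
        = Matrix.of ![![e₁, e₂], ![e₃, e₁]] := by
  set L := Fintype.linearCombination k A.col
  have hcol' : ∀ c ≠ 0, LinearIndependent k (L c) := fun c hc => by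
    by_contra h
    apply hcol c hc
    simpa [L, linearCombination_col_apply] using exists_smul_eq_of_not_linearIndependent_fin_two h
  rw [← range_uncurry_fin_two] at hspan
  have hdep : ¬LinearIndependent k (uncurry A) := fun h => by
    simp [finrank_span_eq_card h] at hspan
  obtain ⟨R, hR, hrel⟩ := exists_relation_of_not_linearIndependent hdep
  have hg : IsUnit Rᵀ := linearIndependent_cols_iff_isUnit.1
    (linearIndependent_rows_of_relation hcol' hR hrel)
  have hform : colOp A Rᵀ = !![L (R 0) 0, L (R 1) 0; L (R 0) 1, L (R 0) 0] := by
    ext i j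
    fin_cases i <;> fin_cases j <;> simp [colOp_apply, hrel, L, Matrix.row]
  refine ⟨hg.unit, L (R 0) 0, L (R 1) 0, L (R 0) 1,
    linearIndependent_of_le_span_range (W := span k (range (uncurry A))) ?_ (by simp [hspan]),
    hform⟩
  calc span k (range (uncurry A))
      ≤ span k (range (uncurry (colOp A Rᵀ))) := span_range_le_colOp_of_isUnit A hg
    _ ≤ span k (range ![L (R 0) 0, L (R 1) 0, L (R 0) 1]) := by
      refine span_mono ?_
      rw [hform]
      rintro _ ⟨⟨i, j⟩, rfl⟩
      fin_cases i <;> fin_cases j <;> simp [uncurry]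

theorem span3_normal_form
    {k U : Type} [Field k] [IsAlgClosed k] [CharZero k]
    [AddCommGroup U] [Module k U]
    (A : Matrix (Fin 2) (Fin 2) U)
    (hspan : Module.finrank k (Submodule.span k {A 0 0, A 0 1, A 1 0, A 1 1}) = 3)
    (hcol : ∀ c : Fin 2 → k, c ≠ 0 →
      ¬ ∃ (v : U) (l₁ l₂ : k),
          c 0 • A 0 0 + c 1 • A 0 1 = l₁ • v ∧ c 0 • A 1 0 + c 1 • A 1 1 = l₂ • v) :
    ∃ (g : GL (Fin 2) k) (e₁ e₂ e₃ : U), LinearIndependent k ![e₁, e₂, e₃] ∧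
      (Matrix.of fun i j => ∑ l : Fin 2, ((g : Matrix (Fin 2) (Fin 2) k) l j) • A i l)
        = Matrix.of ![![e₁, e₂], ![e₃, e₁]] :=
  span3_normal_form_general A hspan hcol
end

section
/- Let V be a 5-dimensional k-vector space and N ∈ Mat₂ₓ₂(V). Suppose N has no nontrivial linear combination of its rows of the form (λ₁·v, λ₂·v) for a vector v ∈ V, and likewise no such linear combination of its columns. Then either: (a) the four entries of N are linearly independent, in which case N is equivalent under row operations, column operations, and change of basis of V (i.e., the GL₂(k)×GL₂(k)×GL(V) action) to [[e₁,e₂],[e₃,e₄]]; or (b) the span of the entries is 3-dimensional, in which case N is equivalent to [[e₁,e₂],[e₃,e₁]], where e₁,…,e₄ are linearly independent. -/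
private lemma quad_root' {k : Type} [Field k] [IsAlgClosed k] (p q r : k) (hp : p ≠ 0) :
    ∃ x : k, p * x ^ 2 + q * x + r = 0 := by
  obtain ⟨x, hx⟩ := IsAlgClosed.exists_root
    (Polynomial.C p * Polynomial.X ^ 2 + Polynomial.C q * Polynomial.X + Polynomial.C r)
    (by rw [Polynomial.degree_quadratic hp]; exact two_ne_zero)
  exact ⟨x, by simpa using hx⟩

theorem classification_of_N
    {k V : Type} [Field k] [IsAlgClosed k] [CharZero k]
    [AddCommGroup V] [Module k V] [FiniteDimensional k V]
    (hV : Module.finrank k V = 5)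
    (N : Matrix (Fin 2) (Fin 2) V)
    (hrow : ∀ c : Fin 2 → k, c ≠ 0 →
      ¬ ∃ (v : V) (l₁ l₂ : k),
          c 0 • N 0 0 + c 1 • N 1 0 = l₁ • v ∧ c 0 • N 0 1 + c 1 • N 1 1 = l₂ • v)
    (hcol : ∀ c : Fin 2 → k, c ≠ 0 →
      ¬ ∃ (v : V) (l₁ l₂ : k),
          c 0 • N 0 0 + c 1 • N 0 1 = l₁ • v ∧ c 0 • N 1 0 + c 1 • N 1 1 = l₂ • v) :
    (LinearIndependent k ![N 0 0, N 0 1, N 1 0, N 1 1] ∧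
      ∃ (g h : GL (Fin 2) k) (φ : V ≃ₗ[k] V) (e : Fin 4 → V),
        LinearIndependent k e ∧
        (Matrix.of fun i j => ∑ a : Fin 2, ∑ b : Fin 2,
            (((h⁻¹ : GL (Fin 2) k) : Matrix (Fin 2) (Fin 2) k) i a *
              ((g : Matrix (Fin 2) (Fin 2) k) b j)) • φ (N a b))
          = Matrix.of ![![e 0, e 1], ![e 2, e 3]]) ∨
    (Module.finrank k (Submodule.span k {N 0 0, N 0 1, N 1 0, N 1 1}) = 3 ∧
      ∃ (g h : GL (Fin 2) k) (φ : V ≃ₗ[k] V) (e : Fin 4 → V),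
        LinearIndependent k e ∧
        (Matrix.of fun i j => ∑ a : Fin 2, ∑ b : Fin 2,
            (((h⁻¹ : GL (Fin 2) k) : Matrix (Fin 2) (Fin 2) k) i a *
              ((g : Matrix (Fin 2) (Fin 2) k) b j)) • φ (N a b))
          = Matrix.of ![![e 0, e 1], ![e 2, e 0]]) := by
  by_cases hli : LinearIndependent k ![N 0 0, N 0 1, N 1 0, N 1 1]
  · left
    refine ⟨hli, 1, 1, LinearEquiv.refl k V, ![N 0 0, N 0 1, N 1 0, N 1 1], hli, ?_⟩
    ext i j
    fin_cases i <;> fin_cases j <;>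
      simp [Fin.sum_univ_two, Matrix.one_apply]
  · right
    -- extract a nontrivial dependence among the entries
    obtain ⟨a, b, c, d, hdep, hnz⟩ : ∃ a b c d : k,
        (a • N 0 0 + b • N 0 1 + c • N 1 0 + d • N 1 1 = 0) ∧
        ¬(a = 0 ∧ b = 0 ∧ c = 0 ∧ d = 0) := by
      obtain ⟨g0, hsum, i0, hgi⟩ := Fintype.not_linearIndependent_iff.mp hli
      refine ⟨g0 0, g0 1, g0 2, g0 3, ?_, ?_⟩
      · rw [Fin.sum_univ_four] at hsum; simpa using hsum
      · rintro ⟨h0, h1, h2, h3⟩; fin_cases i0 <;> simp_all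
    -- no rank-one dependence is possible
    have key : ∀ u0 u1 v0 v1 : k, ¬(u0 = 0 ∧ u1 = 0) → ¬(v0 = 0 ∧ v1 = 0) →
        (u0*v0) • N 0 0 + (u0*v1) • N 0 1 + (u1*v0) • N 1 0 + (u1*v1) • N 1 1 = 0 →
        False := by
      intro u0 u1 v0 v1 hu hv hdep'
      have hune : (![u0, u1] : Fin 2 → k) ≠ 0 := by
        intro h; exact hu ⟨congrFun h 0, congrFun h 1⟩
      apply hrow ![u0, u1] hune
      have hcomb : v0 • (u0 • N 0 0 + u1 • N 1 0) + v1 • (u0 • N 0 1 + u1 • N 1 1) = 0 := by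
        linear_combination (norm := module) hdep'
      by_cases hv0 : v0 = 0
      · have hv1 : v1 ≠ 0 := fun h => hv ⟨hv0, h⟩
        have hR : u0 • N 0 1 + u1 • N 1 1 = (-(v0/v1)) • (u0 • N 0 0 + u1 • N 1 0) := by
          have h2 : v1 • (u0 • N 0 1 + u1 • N 1 1) =
              (v1 * (-(v0/v1))) • (u0 • N 0 0 + u1 • N 1 0) := by
            have hmul : v1 * (-(v0/v1)) = -v0 := by field_simp
            rw [hmul]
            linear_combination (norm := module) hcomb
          rw [mul_smul] at h2
          exact smul_right_injective V hv1 h2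
        exact ⟨u0 • N 0 0 + u1 • N 1 0, 1, -(v0/v1), by simp, by simpa using hR⟩
      · have hR : u0 • N 0 0 + u1 • N 1 0 = (-(v1/v0)) • (u0 • N 0 1 + u1 • N 1 1) := by
          have h2 : v0 • (u0 • N 0 0 + u1 • N 1 0) =
              (v0 * (-(v1/v0))) • (u0 • N 0 1 + u1 • N 1 1) := by
            have hmul : v0 * (-(v1/v0)) = -v1 := by field_simp
            rw [hmul]
            linear_combination (norm := module) hcomb
          rw [mul_smul] at h2
          exact smul_right_injective V hv0 h2
        exact ⟨u0 • N 0 1 + u1 • N 1 1, -(v1/v0), 1, by simpa using hR, by simp⟩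
    -- every nontrivial dependence matrix has nonzero determinant
    have detne : ∀ a' b' c' d' : k,
        a' • N 0 0 + b' • N 0 1 + c' • N 1 0 + d' • N 1 1 = 0 →
        ¬(a' = 0 ∧ b' = 0 ∧ c' = 0 ∧ d' = 0) → a' * d' - b' * c' ≠ 0 := by
      intro a' b' c' d' hdep' hnz' hdet
      by_cases ha' : a' ≠ 0
      · refine key a' c' 1 (b'/a') (fun h => ha' h.1) (by simp) ?_
        have e1 : a' * (b'/a') = b' := by field_simp
        have e2 : c' * (b'/a') = d' := by
          field_simp; linear_combination -hdet
        rw [mul_one, mul_one, e1, e2]; exact hdep'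
      · push_neg at ha'
        subst ha'
        by_cases hb' : b' ≠ 0
        · have hc' : c' = 0 := by
            have h5 : b' * c' = 0 := by linear_combination -hdet
            exact (mul_eq_zero.1 h5).resolve_left hb'
          subst hc'
          refine key b' d' 0 1 (fun h => hb' h.1) (by simp) ?_
          linear_combination (norm := module) hdep'
        · push_neg at hb'
          subst hb'
          by_cases hcc : c' ≠ 0
          · refine key 0 1 c' d' (by simp) (fun h => hcc h.1) ?_
            linear_combination (norm := module) hdep'
          · push_neg at hcc
            subst hcc
            have hd' : d' ≠ 0 := fun h => hnz' ⟨rfl, rfl, rfl, h⟩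
            refine key 0 1 0 d' (by simp) (fun h => hd' h.2) ?_
            linear_combination (norm := module) hdep'
    have hD : a * d - b * c ≠ 0 := detne a b c d hdep hnz
    -- all dependences are multiples of (a,b,c,d)
    have uniq : ∀ a' b' c' d' : k,
        a' • N 0 0 + b' • N 0 1 + c' • N 1 0 + d' • N 1 1 = 0 →
        ∃ t : k, a' = t * a ∧ b' = t * b ∧ c' = t * c ∧ d' = t * d := by
      intro a' b' c' d' hdep'
      obtain ⟨x, hx⟩ := quad_root' (a*d - b*c) (a*d' + a'*d - b*c' - b'*c) (a'*d' - b'*c') hD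
      have hcomb : (x*a + a') • N 0 0 + (x*b + b') • N 0 1 + (x*c + c') • N 1 0 +
          (x*d + d') • N 1 1 = 0 := by
        linear_combination (norm := module) x • hdep + hdep'
      have hdet0 : (x*a + a') * (x*d + d') - (x*b + b') * (x*c + c') = 0 := by
        linear_combination hx
      have hall : (x*a + a') = 0 ∧ (x*b + b') = 0 ∧ (x*c + c') = 0 ∧ (x*d + d') = 0 := by
        by_contra hcon
        exact detne _ _ _ _ hcomb hcon hdet0
      exact ⟨-x, by linear_combination hall.1, by linear_combination hall.2.1,
        by linear_combination hall.2.2.1, by linear_combination hall.2.2.2⟩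
    -- the three transformed entries are linearly independent
    have li3 : LinearIndependent k
        ![a • N 0 0 + c • N 1 0, a • N 0 1 + c • N 1 1, (-b) • N 0 0 + (-d) • N 1 0] := by
      refine Fintype.linearIndependent_iff.2 (fun f hf => ?_)
      rw [Fin.sum_univ_three] at hf
      simp only [Matrix.cons_val_zero, Matrix.cons_val_one, Matrix.head_cons,
        Matrix.cons_val_two, Matrix.tail_cons] at hf
      have hrel : (f 0 * a - f 2 * b) • N 0 0 + (f 1 * a) • N 0 1 +
          (f 0 * c - f 2 * d) • N 1 0 + (f 1 * c) • N 1 1 = 0 := by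
        linear_combination (norm := module) hf
      obtain ⟨t, h1, h2, h3, h4⟩ := uniq _ _ _ _ hrel
      have hf1 : f 1 = 0 := by
        have h5 : f 1 * (a*d - b*c) = 0 := by linear_combination d * h2 - b * h4
        exact (mul_eq_zero.1 h5).resolve_right hD
      have hf2 : f 2 = 0 := by
        have h5 : f 2 * (a*d - b*c) = 0 := by linear_combination c * h1 - a * h3
        exact (mul_eq_zero.1 h5).resolve_right hD
      have ht : t = 0 := by
        by_contra ht
        have hb0 : b = 0 := by
          have h5 : t * b = 0 := by linear_combination -h2 + a * hf1
          exact (mul_eq_zero.1 h5).resolve_left ht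
        have hd0 : d = 0 := by
          have h5 : t * d = 0 := by linear_combination -h4 + c * hf1
          exact (mul_eq_zero.1 h5).resolve_left ht
        exact hD (by rw [hb0, hd0]; ring)
      have hf0 : f 0 = 0 := by
        by_contra hf0
        have ha0 : a = 0 := by
          have h5 : f 0 * a = 0 := by linear_combination h1 + b * hf2 + a * ht
          exact (mul_eq_zero.1 h5).resolve_left hf0
        have hc0 : c = 0 := by
          have h5 : f 0 * c = 0 := by linear_combination h3 + d * hf2 + c * ht
          exact (mul_eq_zero.1 h5).resolve_left hf0
        exact hD (by rw [ha0, hc0]; ring)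
      intro i; fin_cases i <;> assumption
    -- the fourth entry combination equals the first
    have hE3 : (-b) • N 0 1 + (-d) • N 1 1 = a • N 0 0 + c • N 1 0 := by
      linear_combination (norm := module) -hdep
    -- span equality
    set S : Set V := Set.range
      ![a • N 0 0 + c • N 1 0, a • N 0 1 + c • N 1 1, (-b) • N 0 0 + (-d) • N 1 0] with hS
    have hmemE0 : a • N 0 0 + c • N 1 0 ∈ S := ⟨0, rfl⟩
    have hmemE1 : a • N 0 1 + c • N 1 1 ∈ S := ⟨1, rfl⟩
    have hmemE2 : (-b) • N 0 0 + (-d) • N 1 0 ∈ S := ⟨2, rfl⟩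
    have hspan : Submodule.span k {N 0 0, N 0 1, N 1 0, N 1 1} = Submodule.span k S := by
      apply le_antisymm
      · rw [Submodule.span_le]
        have m00 : N 0 0 ∈ Submodule.span k S := by
          rw [← Submodule.smul_mem_iff _ hD]
          have h5 : (a*d - b*c) • N 0 0 =
              d • (a • N 0 0 + c • N 1 0) + c • ((-b) • N 0 0 + (-d) • N 1 0) := by module
          rw [h5]
          exact Submodule.add_mem _
            (Submodule.smul_mem _ _ (Submodule.subset_span hmemE0))
            (Submodule.smul_mem _ _ (Submodule.subset_span hmemE2))
        have m10 : N 1 0 ∈ Submodule.span k S := by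
          rw [← Submodule.smul_mem_iff _ hD]
          have h5 : (a*d - b*c) • N 1 0 =
              (-b) • (a • N 0 0 + c • N 1 0) + (-a) • ((-b) • N 0 0 + (-d) • N 1 0) := by
            module
          rw [h5]
          exact Submodule.add_mem _
            (Submodule.smul_mem _ _ (Submodule.subset_span hmemE0))
            (Submodule.smul_mem _ _ (Submodule.subset_span hmemE2))
        have m01 : N 0 1 ∈ Submodule.span k S := by
          rw [← Submodule.smul_mem_iff _ hD]
          have h5 : (a*d - b*c) • N 0 1 =
              d • (a • N 0 1 + c • N 1 1) + c • ((-b) • N 0 1 + (-d) • N 1 1) := by module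
          rw [h5, hE3]
          exact Submodule.add_mem _
            (Submodule.smul_mem _ _ (Submodule.subset_span hmemE1))
            (Submodule.smul_mem _ _ (Submodule.subset_span hmemE0))
        have m11 : N 1 1 ∈ Submodule.span k S := by
          rw [← Submodule.smul_mem_iff _ hD]
          have h5 : (a*d - b*c) • N 1 1 =
              (-b) • (a • N 0 1 + c • N 1 1) + (-a) • ((-b) • N 0 1 + (-d) • N 1 1) := by
            module
          rw [h5, hE3]
          exact Submodule.add_mem _
            (Submodule.smul_mem _ _ (Submodule.subset_span hmemE1))
            (Submodule.smul_mem _ _ (Submodule.subset_span hmemE0))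
        rintro y (rfl | rfl | rfl | rfl)
        exacts [m00, m01, m10, m11]
      · rw [Submodule.span_le]
        rintro y ⟨i, rfl⟩
        have p00 : N 0 0 ∈ Submodule.span k ({N 0 0, N 0 1, N 1 0, N 1 1} : Set V) :=
          Submodule.subset_span (by simp)
        have p01 : N 0 1 ∈ Submodule.span k ({N 0 0, N 0 1, N 1 0, N 1 1} : Set V) :=
          Submodule.subset_span (by simp)
        have p10 : N 1 0 ∈ Submodule.span k ({N 0 0, N 0 1, N 1 0, N 1 1} : Set V) :=
          Submodule.subset_span (by simp)
        have p11 : N 1 1 ∈ Submodule.span k ({N 0 0, N 0 1, N 1 0, N 1 1} : Set V) :=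
          Submodule.subset_span (by simp)
        fin_cases i <;> simp only [Matrix.cons_val_zero, Matrix.cons_val_one,
          Matrix.head_cons, Matrix.cons_val_two, Matrix.tail_cons] <;>
          exact Submodule.add_mem _ (Submodule.smul_mem _ _ (by assumption))
            (Submodule.smul_mem _ _ (by assumption))
    have hr3 : Module.finrank k (Submodule.span k S) = 3 := by
      rw [hS]
      simpa using finrank_span_eq_card li3
    -- find a fourth independent vector
    obtain ⟨x, hx⟩ : ∃ x : V, x ∉ Submodule.span k S := by
      by_contra h
      push_neg at h
      have htop : Submodule.span k S = ⊤ := Submodule.eq_top_iff'.2 h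
      rw [htop, finrank_top, hV] at hr3
      norm_num at hr3
    have hsnoc : (![a • N 0 0 + c • N 1 0, a • N 0 1 + c • N 1 1,
        (-b) • N 0 0 + (-d) • N 1 0, x] : Fin 4 → V) =
        Fin.snoc ![a • N 0 0 + c • N 1 0, a • N 0 1 + c • N 1 1,
          (-b) • N 0 0 + (-d) • N 1 0] x := by
      funext i; fin_cases i <;> rfl
    have lie : LinearIndependent k ![a • N 0 0 + c • N 1 0, a • N 0 1 + c • N 1 1,
        (-b) • N 0 0 + (-d) • N 1 0, x] := by
      rw [hsnoc]
      exact linearIndependent_fin_snoc.2 ⟨li3, hx⟩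
    -- build the group elements
    have hHdet : Matrix.det !![a, c; -b, -d] ≠ 0 := by
      rw [Matrix.det_fin_two_of]
      intro h'; exact hD (by linear_combination -h')
    refine ⟨by rw [hspan]; exact hr3, 1,
      (Matrix.GeneralLinearGroup.mkOfDetNeZero !![a, c; -b, -d] hHdet)⁻¹,
      LinearEquiv.refl k V,
      ![a • N 0 0 + c • N 1 0, a • N 0 1 + c • N 1 1, (-b) • N 0 0 + (-d) • N 1 0, x],
      lie, ?_⟩
    have hcoe : (((Matrix.GeneralLinearGroup.mkOfDetNeZero !![a, c; -b, -d] hHdet)⁻¹⁻¹ :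
        GL (Fin 2) k) : Matrix (Fin 2) (Fin 2) k) = !![a, c; -b, -d] := by
      rw [inv_inv]; rfl
    ext i j
    rw [Matrix.of_apply, hcoe]
    fin_cases i <;> fin_cases j
    · simp [Fin.sum_univ_two, Matrix.one_apply]
    · simp [Fin.sum_univ_two, Matrix.one_apply]
    · simp [Fin.sum_univ_two, Matrix.one_apply]
    · simp [Fin.sum_univ_two, Matrix.one_apply]
      linear_combination (norm := module) -hdep
end

section
/- Let V be a 5-dimensional k-vector space with basis e₀,…,e₄ and let N = [[e₁,e₂],[e₃,e₁]] ∈ Mat₂ₓ₂(V). If g, h ∈ GL₂(k) and λ ∈ k* satisfy g·N·h = λ·N (where the matrix products are taken with scalar matrices acting on vector entries), then g and h are both scalar multiples of the identity matrix. -/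
/-! Expanding `g·N·h` in the independent vectors `e₁, e₂, e₃`, the `(i, j)` entry has
coefficients `(g h)ᵢⱼ`, `gᵢ₀ h₁ⱼ` and `gᵢ₁ h₀ⱼ`. Comparing with `λ·N` gives `g h = λ·1` and
identifies the outer products (column 0 of `g`)(row 1 of `h`) and (column 1 of `g`)(row 0 of `h`)
with `λ E₀₁` and `λ E₁₀`. A nonzero outer product supported at one entry forces its factors to be
supported at one coordinate, so `g` and `h` are diagonal, and `g h = λ·1` then equalises their
diagonal entries. -/

open Matrix

theorem LinearIndependent.eq_of_triple {R M : Type*} [Semiring R] [AddCommMonoid M] [Module R M]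
    {x y z : M} (h : LinearIndependent R ![x, y, z]) {s t u s' t' u' : R}
    (h' : s • x + t • y + u • z = s' • x + t' • y + u' • z) : s = s' ∧ t = t' ∧ u = u' := by
  have := Fintype.linearIndependent_iffₛ.mp h ![s, t, u] ![s', t', u']
    (by simpa [Fin.sum_univ_three] using h')
  exact ⟨this 0, this 1, this 2⟩

theorem Matrix.eq_zero_of_vecMulVec_eq_single {m n R : Type*} [DecidableEq m] [DecidableEq n]
    [MulZeroClass R] [NoZeroDivisors R] {u : m → R} {v : n → R} {i : m} {j : n} {c : R}
    (hc : c ≠ 0) (h : vecMulVec u v = single i j c) :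
    (∀ i', i' ≠ i → u i' = 0) ∧ ∀ j', j' ≠ j → v j' = 0 := by
  have entry i' j' : u i' * v j' = single i j c i' j' := by rw [← h, vecMulVec_apply]
  have hij : u i * v j ≠ 0 := by simpa [entry] using hc
  refine ⟨fun i' hi' => ?_, fun j' hj' => ?_⟩
  · simpa [single_apply_of_row_ne hi'.symm, right_ne_zero_of_mul hij] using entry i' j
  · simpa [single_apply_of_col_ne _ _ hj'.symm, left_ne_zero_of_mul hij] using entry i j'

section
variable {k V : Type*} [Field k] [AddCommGroup V] [Module k V]

theorem sum_mul_smul_of_fin_two_apply (G H : Matrix (Fin 2) (Fin 2) k) (e₁ e₂ e₃ : V)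
    (i j : Fin 2) :
    ∑ a : Fin 2, ∑ b : Fin 2, (G i a * H b j) • Matrix.of ![![e₁, e₂], ![e₃, e₁]] a b =
      (G * H) i j • e₁ + vecMulVec (Gᵀ 0) (H 1) i j • e₂ + vecMulVec (Gᵀ 1) (H 0) i j • e₃ := by
  simp only [Fin.sum_univ_two, mul_apply, vecMulVec_apply, transpose_apply, of_apply,
    cons_val_zero, cons_val_one]
  module

theorem smul_of_fin_two_apply (lam : k) (e₁ e₂ e₃ : V) (i j : Fin 2) :
    lam • Matrix.of ![![e₁, e₂], ![e₃, e₁]] i j =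
      (lam • 1 : Matrix (Fin 2) (Fin 2) k) i j • e₁ + single 0 1 lam i j • e₂ +
        single 1 0 lam i j • e₃ := by
  fin_cases i <;> fin_cases j <;> simp

end

theorem Matrix.exists_eq_smul_one_of_mul_eq_smul_one {R : Type*} [CommRing R] [IsDomain R]
    {G H : Matrix (Fin 2) (Fin 2) R} {lam : R} (hlam : lam ≠ 0)
    (hGH : G * H = lam • 1) (h₀₁ : vecMulVec (Gᵀ 0) (H 1) = single 0 1 lam)
    (h₁₀ : vecMulVec (Gᵀ 1) (H 0) = single 1 0 lam) :
    (∃ c : R, G = c • 1) ∧ ∃ d : R, H = d • 1 := by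
  obtain ⟨hG₁₀, hH₁₀⟩ := eq_zero_of_vecMulVec_eq_single hlam h₀₁
  obtain ⟨hG₀₁, hH₀₁⟩ := eq_zero_of_vecMulVec_eq_single hlam h₁₀
  replace hG₁₀ : G 1 0 = 0 := hG₁₀ 1 (by decide)
  replace hH₁₀ : H 1 0 = 0 := hH₁₀ 0 (by decide)
  replace hG₀₁ : G 0 1 = 0 := hG₀₁ 0 (by decide)
  replace hH₀₁ : H 0 1 = 0 := hH₀₁ 1 (by decide)
  have h₀₁ : G 0 0 * H 1 1 = lam := by simpa [vecMulVec_apply] using congrFun₂ h₀₁ 0 1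
  have h₁₀ : G 1 1 * H 0 0 = lam := by simpa [vecMulVec_apply] using congrFun₂ h₁₀ 1 0
  have h₀₀ : G 0 0 * H 0 0 = lam := by simpa [mul_apply, hG₀₁] using congrFun₂ hGH 0 0
  have hH : H 1 1 = H 0 0 :=
    mul_left_cancel₀ (left_ne_zero_of_mul (h₀₀ ▸ hlam)) (h₀₁.trans h₀₀.symm)
  have hG : G 1 1 = G 0 0 :=
    mul_right_cancel₀ (right_ne_zero_of_mul (h₀₀ ▸ hlam)) (h₁₀.trans h₀₀.symm)
  refine ⟨⟨G 0 0, ?_⟩, ⟨H 0 0, ?_⟩⟩ <;> ext i j <;> fin_cases i <;> fin_cases j <;> simp [*]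

theorem stabilizer_trivial_T3_general
    {k V : Type} [Field k]
    [AddCommGroup V] [Module k V]
    (e₁ e₂ e₃ : V) (hli : LinearIndependent k ![e₁, e₂, e₃])
    (g h : GL (Fin 2) k) (lam : k) (hlam : lam ≠ 0)
    (heq : ∀ i j : Fin 2,
      (∑ a : Fin 2, ∑ b : Fin 2,
          ((g : Matrix (Fin 2) (Fin 2) k) i a * (h : Matrix (Fin 2) (Fin 2) k) b j) •
            (Matrix.of ![![e₁, e₂], ![e₃, e₁]]) a b)
        = lam • (Matrix.of ![![e₁, e₂], ![e₃, e₁]]) i j) :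
    (∃ c : k, (g : Matrix (Fin 2) (Fin 2) k) = c • (1 : Matrix (Fin 2) (Fin 2) k)) ∧
    (∃ d : k, (h : Matrix (Fin 2) (Fin 2) k) = d • (1 : Matrix (Fin 2) (Fin 2) k)) := by
  have coeffs i j := hli.eq_of_triple <|
    (sum_mul_smul_of_fin_two_apply _ _ e₁ e₂ e₃ i j).symm.trans <|
      (heq i j).trans (smul_of_fin_two_apply lam e₁ e₂ e₃ i j)
  exact exists_eq_smul_one_of_mul_eq_smul_one hlam (ext fun i j => (coeffs i j).1)
    (ext fun i j => (coeffs i j).2.1) (ext fun i j => (coeffs i j).2.2)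

theorem stabilizer_trivial_T3
    {k V : Type} [Field k] [IsAlgClosed k] [CharZero k]
    [AddCommGroup V] [Module k V] [FiniteDimensional k V]
    (hV : Module.finrank k V = 5)
    (e₁ e₂ e₃ : V) (hli : LinearIndependent k ![e₁, e₂, e₃])
    (g h : GL (Fin 2) k) (lam : k) (hlam : lam ≠ 0)
    (heq : ∀ i j : Fin 2,
      (∑ a : Fin 2, ∑ b : Fin 2,
          ((g : Matrix (Fin 2) (Fin 2) k) i a * (h : Matrix (Fin 2) (Fin 2) k) b j) •
            (Matrix.of ![![e₁, e₂], ![e₃, e₁]]) a b)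
        = lam • (Matrix.of ![![e₁, e₂], ![e₃, e₁]]) i j) :
    (∃ c : k, (g : Matrix (Fin 2) (Fin 2) k) = c • (1 : Matrix (Fin 2) (Fin 2) k)) ∧
    (∃ d : k, (h : Matrix (Fin 2) (Fin 2) k) = d • (1 : Matrix (Fin 2) (Fin 2) k)) :=
  stabilizer_trivial_T3_general e₁ e₂ e₃ hli g h lam hlam heq
end

section
/- Let V be a 5-dimensional k-vector space with basis e₀,…,e₄ and let N = [[e₁,e₂],[e₃,e₄]] ∈ Mat₂ₓ₂(V). If g, h ∈ GL₂(k) and λ ∈ k* satisfy g·N·h = λ·N, then g and h are diagonal or anti-diagonal in a compatible way; in particular if additionally g·N·h = λN with the entries e₁,e₂,e₃,e₄ held fixed (not permuted), then g and h are scalar matrices. -/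
/-!
Since the four entries of `N` are linearly independent, comparing coefficients in
`g·N·h = λ·N` gives `g i a * h b j = λ` if `(a, b) = (i, j)` and `0` otherwise. Fixing
`(b, j) = (0, 0)` shows that `g` is `λ / h 0 0` times the identity (note `h 0 0 ≠ 0`, since
`g 0 0 * h 0 0 = λ ≠ 0`), and symmetrically `h` is `λ / g 0 0` times the identity.
-/

theorem LinearIndependent.eq_ite_of_sum_smul_eq_smul {ι R M : Type*} [Fintype ι] [DecidableEq ι]
    [Semiring R] [AddCommMonoid M] [Module R M] {v : ι → M} (hv : LinearIndependent R v)
    {c : ι → R} {r : R} {q : ι} (h : ∑ p, c p • v p = r • v q) (p : ι) :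
    c p = if p = q then r else 0 :=
  Fintype.linearIndependent_iffₛ.mp hv c (fun p => if p = q then r else 0)
    (by simp [h, ite_smul]) p

namespace Matrix

theorem mul_entry_eq_ite_of_sum_smul_eq_smul {m n R M : Type*} [Fintype m] [Fintype n]
    [DecidableEq m] [DecidableEq n] [Semiring R] [AddCommMonoid M] [Module R M]
    {N : Matrix m n M} (hN : LinearIndependent R fun p : m × n => N p.1 p.2)
    {G : Matrix m m R} {H : Matrix n n R} {r : R}
    (h : ∀ i j, ∑ a, ∑ b, (G i a * H b j) • N a b = r • N i j) (i a : m) (j b : n) :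
    G i a * H b j = if i = a ∧ j = b then r else 0 := by
  simpa [Prod.ext_iff, eq_comm] using
    hN.eq_ite_of_sum_smul_eq_smul (c := fun p => G i p.1 * H p.2 j) (q := (i, j))
      ((Fintype.sum_prod_type _).trans (h i j)) (a, b)

theorem eq_div_smul_one_of_mul_eq_ite {m R : Type*} [DecidableEq m] [DivisionRing R]
    {G : Matrix m m R} {x r : R} (hx : x ≠ 0) (h : ∀ i a, G i a * x = if i = a then r else 0) :
    G = (r / x) • 1 := by
  ext i a
  by_cases hia : i = a
  · subst hia
    simpa [eq_div_iff hx] using h i i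
  · simpa [hia, hx] using h i a

end Matrix

theorem stabilizer_T4_general
    {k V : Type} [Field k]
    [AddCommGroup V] [Module k V]
    (e : Fin 4 → V) (hli : LinearIndependent k e)
    (g h : GL (Fin 2) k) (lam : k) (hlam : lam ≠ 0)
    (heq : ∀ i j : Fin 2,
      (∑ a : Fin 2, ∑ b : Fin 2,
          ((g : Matrix (Fin 2) (Fin 2) k) i a * (h : Matrix (Fin 2) (Fin 2) k) b j) •
            (Matrix.of ![![e 0, e 1], ![e 2, e 3]]) a b)
        = lam • (Matrix.of ![![e 0, e 1], ![e 2, e 3]]) i j) :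
    (((g : Matrix (Fin 2) (Fin 2) k) 0 1 = 0 ∧ (g : Matrix (Fin 2) (Fin 2) k) 1 0 = 0 ∧
      (h : Matrix (Fin 2) (Fin 2) k) 0 1 = 0 ∧ (h : Matrix (Fin 2) (Fin 2) k) 1 0 = 0) ∨
     ((g : Matrix (Fin 2) (Fin 2) k) 0 0 = 0 ∧ (g : Matrix (Fin 2) (Fin 2) k) 1 1 = 0 ∧
      (h : Matrix (Fin 2) (Fin 2) k) 0 0 = 0 ∧ (h : Matrix (Fin 2) (Fin 2) k) 1 1 = 0)) ∧
    (∃ c : k, (g : Matrix (Fin 2) (Fin 2) k) = c • (1 : Matrix (Fin 2) (Fin 2) k)) ∧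
    (∃ d : k, (h : Matrix (Fin 2) (Fin 2) k) = d • (1 : Matrix (Fin 2) (Fin 2) k)) := by
  set G := (g : Matrix (Fin 2) (Fin 2) k)
  set H := (h : Matrix (Fin 2) (Fin 2) k)
  have hN : LinearIndependent k fun p : Fin 2 × Fin 2 =>
      (Matrix.of ![![e 0, e 1], ![e 2, e 3]]) p.1 p.2 := by
    -- `finProdFinEquiv (a, b) = 2 * a + b` lists the entries of `N` in row-major order
    convert hli.comp _ (finProdFinEquiv : Fin 2 × Fin 2 ≃ Fin 4).injective using 1
    funext ⟨a, b⟩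
    fin_cases a <;> fin_cases b <;> rfl
  have hGH := Matrix.mul_entry_eq_ite_of_sum_smul_eq_smul hN heq
  have hG₀H₀ : G 0 0 * H 0 0 ≠ 0 := by
    rw [hGH 0 0 0 0, if_pos ⟨rfl, rfl⟩]
    exact hlam
  have hG : G = (lam / H 0 0) • 1 :=
    Matrix.eq_div_smul_one_of_mul_eq_ite (right_ne_zero_of_mul hG₀H₀) fun i a => by
      simpa using hGH i a 0 0
  have hH : H = (lam / G 0 0) • 1 :=
    Matrix.eq_div_smul_one_of_mul_eq_ite (left_ne_zero_of_mul hG₀H₀) fun b j => by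
      rw [mul_comm, hGH 0 0 j b]
      simp [eq_comm]
  refine ⟨Or.inl ?_, ⟨_, hG⟩, ⟨_, hH⟩⟩
  rw [hG, hH]
  simp

theorem stabilizer_T4
    {k V : Type} [Field k] [IsAlgClosed k] [CharZero k]
    [AddCommGroup V] [Module k V] [FiniteDimensional k V]
    (hV : Module.finrank k V = 5)
    (e : Fin 4 → V) (hli : LinearIndependent k e)
    (g h : GL (Fin 2) k) (lam : k) (hlam : lam ≠ 0)
    (heq : ∀ i j : Fin 2,
      (∑ a : Fin 2, ∑ b : Fin 2,
          ((g : Matrix (Fin 2) (Fin 2) k) i a * (h : Matrix (Fin 2) (Fin 2) k) b j) •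
            (Matrix.of ![![e 0, e 1], ![e 2, e 3]]) a b)
        = lam • (Matrix.of ![![e 0, e 1], ![e 2, e 3]]) i j) :
    (((g : Matrix (Fin 2) (Fin 2) k) 0 1 = 0 ∧ (g : Matrix (Fin 2) (Fin 2) k) 1 0 = 0 ∧
      (h : Matrix (Fin 2) (Fin 2) k) 0 1 = 0 ∧ (h : Matrix (Fin 2) (Fin 2) k) 1 0 = 0) ∨
     ((g : Matrix (Fin 2) (Fin 2) k) 0 0 = 0 ∧ (g : Matrix (Fin 2) (Fin 2) k) 1 1 = 0 ∧
      (h : Matrix (Fin 2) (Fin 2) k) 0 0 = 0 ∧ (h : Matrix (Fin 2) (Fin 2) k) 1 1 = 0)) ∧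
    (∃ c : k, (g : Matrix (Fin 2) (Fin 2) k) = c • (1 : Matrix (Fin 2) (Fin 2) k)) ∧
    (∃ d : k, (h : Matrix (Fin 2) (Fin 2) k) = d • (1 : Matrix (Fin 2) (Fin 2) k)) :=
  stabilizer_T4_general e hli g h lam hlam heq
end

section
/- Let k be an algebraically closed field of characteristic 0 and consider the linear map τ : sl₂(k) ⊕ sl₂(k) → Mat₂ₓ₂(V), (g,h) ↦ g·N − N·h, where V is a 5-dimensional k-vector space with basis e₀,…,e₄ and N = [[e₁,e₂],[e₃,e₁]]. Then τ is injective, i.e., has rank 6. -/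
/- STATEMENT 13: The linear map τ : sl₂(k) ⊕ sl₂(k) → Mat₂ₓ₂(V), (g,h) ↦ g·N − N·h,
for `N = [[e₁,e₂],[e₃,e₁]]` built from basis vectors of a 5-dimensional space `V`,
is injective (has rank 6); i.e. its kernel is trivial. -/

theorem tau_injective
    {k V : Type} [Field k] [IsAlgClosed k] [CharZero k]
    [AddCommGroup V] [Module k V]
    (b : Module.Basis (Fin 5) k V)
    (g h : Matrix (Fin 2) (Fin 2) k)
    (hg : Matrix.trace g = 0) (hh : Matrix.trace h = 0)
    (heq : ∀ i j : Fin 2,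
      (∑ a : Fin 2, g i a • (Matrix.of ![![b 1, b 2], ![b 3, b 1]]) a j) -
      (∑ a : Fin 2, h a j • (Matrix.of ![![b 1, b 2], ![b 3, b 1]]) i a) = 0) :
    g = 0 ∧ h = 0 := by
  have key : ∀ (i j : Fin 2) (l : Fin 5),
      (b.repr ((∑ a : Fin 2, g i a • (Matrix.of ![![b 1, b 2], ![b 3, b 1]]) a j) -
      (∑ a : Fin 2, h a j • (Matrix.of ![![b 1, b 2], ![b 3, b 1]]) i a))) l = 0 := by
    intro i j l; rw [heq i j]; simp
  have e1 := key 0 0 1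
  have e2 := key 0 0 2
  have e3 := key 0 0 3
  have e4 := key 0 1 1
  have e5 := key 0 1 2
  have e6 := key 1 0 1
  have e7 := key 1 0 3
  have e8 := key 1 1 1
  have e9 := key 1 1 2
  have e10 := key 1 1 3
  simp [Fin.sum_univ_two, Finsupp.single_apply] at e1 e2 e3 e4 e5 e6 e7 e8 e9 e10
  simp [Matrix.trace, Fin.sum_univ_two, Matrix.diag] at hg hh
  have k1 : g 0 0 = 0 := by linear_combination (hg + e1 - e7) / 2
  have k2 : g 1 1 = 0 := by linear_combination (hg - e1 + e7) / 2
  have k3 : h 0 0 = 0 := by linear_combination k1 - e1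
  have k4 : h 1 1 = 0 := by linear_combination k1 - e5
  constructor <;> ext i j <;> fin_cases i <;> fin_cases j <;>
    simp [k1, k2, k3, k4, e2, e3, e9, e10]
end

section
/- Let V = k⁵ with basis e₀,…,e₄ and let W range over 2-dimensional subspaces of V (lines ℓ = ℙW in ℙ⁴). For N = [[e₁,e₂],[e₃,e₄]], the set of W such that the subspace k·(e₁,e₂) + k·(e₃,e₄) ⊂ V⊕V meets W⊕W nontrivially equals the set of W spanned by pairs (te₁+se₃, te₂+se₄) for (s:t) ∈ ℙ¹; the corresponding Plücker points (te₁+se₃)∧(te₂+se₄) ∈ ⋀²V trace out a smooth conic in ℙ(⋀²V). -/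
/-!
A nonzero vector of `span {(e₁, e₂), (e₃, e₄)}` is `t • (e₁, e₂) + s • (e₃, e₄)` with
`(s, t) ≠ 0`; it lies in `W ⊕ W` iff `t e₁ + s e₃` and `t e₂ + s e₄` both lie in `W`, and
these two vectors are independent, so they span the plane `W`. The Plücker coordinates
`p₁₂, p₁₄, p₃₄` of their wedge are `t², ts, s²`: they are never all zero, and if
`(t'², t's', s'²)` is proportional to `(t², ts, s²)` then `(s't - st')² = 0`.
-/

open ExteriorAlgebra

namespace ExteriorAlgebra

variable {R M : Type*} [CommRing R] [AddCommGroup M] [Module R M]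

noncomputable def wedgePairing (f g : Module.Dual R M) : ExteriorAlgebra R M →ₗ[R] R :=
  liftAlternating (Function.update (fun _ => 0) 2
    (Matrix.detRowAlternating.compLinearMap (LinearMap.pi ![f, g])))

theorem wedgePairing_ι_mul_ι (f g : Module.Dual R M) (x y : M) :
    wedgePairing f g (ι R x * ι R y) = f x * g y - f y * g x := by
  have h : ι R x * ι R y = ιMulti R 2 ![x, y] := by simp [ιMulti_apply]
  rw [h, wedgePairing, liftAlternating_apply_ιMulti, Function.update_self,
    AlternatingMap.compLinearMap_apply]
  exact (Matrix.det_fin_two _).trans (by simp [mul_comm])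

end ExteriorAlgebra

theorem Submodule.span_pair_inf_ne_bot_iff {R M : Type*} [Ring R] [AddCommGroup M] [Module R M]
    (p q : M) (U : Submodule R M) :
    Submodule.span R {p, q} ⊓ U ≠ ⊥ ↔ ∃ s t : R, t • p + s • q ≠ 0 ∧ t • p + s • q ∈ U := by
  rw [Submodule.ne_bot_iff]
  constructor
  · rintro ⟨z, hz, hz0⟩
    obtain ⟨t, s, rfl⟩ := Submodule.mem_span_pair.mp (Submodule.mem_inf.mp hz).1
    exact ⟨s, t, hz0, (Submodule.mem_inf.mp hz).2⟩
  · rintro ⟨s, t, hne, hU⟩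
    exact ⟨_, Submodule.mem_inf.mpr ⟨Submodule.mem_span_pair.mpr ⟨t, s, rfl⟩, hU⟩, hne⟩

section Field

variable {K V : Type*} [Field K] [AddCommGroup V] [Module K V]

theorem Submodule.eq_span_pair_iff_of_finrank_eq_two {x y : V}
    (hxy : LinearIndependent K ![x, y]) {W : Submodule K V} (hW : Module.finrank K W = 2) :
    W = Submodule.span K {x, y} ↔ x ∈ W ∧ y ∈ W := by
  refine ⟨fun h => h ▸ ⟨Submodule.subset_span (by simp), Submodule.subset_span (by simp)⟩,
    fun ⟨hx, hy⟩ => ?_⟩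
  have : FiniteDimensional K W := Module.finite_of_finrank_eq_succ hW
  have hspan : Module.finrank K (Submodule.span K {x, y}) = 2 := by
    rw [← Matrix.range_cons_cons_empty]; exact finrank_span_eq_card hxy
  have hle : Submodule.span K {x, y} ≤ W := by
    rw [Submodule.span_le]
    rintro z (rfl | rfl) <;> assumption
  exact (Submodule.eq_of_le_of_finrank_le hle (hW.trans hspan.symm).le).symm

variable {a b c d : V}

theorem LinearIndependent.pair_add_smul_add_smul (h : LinearIndependent K ![a, b, c, d])
    {s t : K} (hst : ¬(s = 0 ∧ t = 0)) :
    LinearIndependent K ![t • a + s • c, t • b + s • d] := by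
  refine LinearIndependent.pair_iff.mpr fun α β hαβ => ?_
  have hcoeff := Fintype.linearIndependent_iff.mp h ![α * t, β * t, α * s, β * s] <| by
    rw [← hαβ]
    simp only [Fin.sum_univ_four, Matrix.cons_val, smul_add, smul_smul]
    abel
  have hαt : α * t = 0 := hcoeff 0
  have hβt : β * t = 0 := hcoeff 1
  have hαs : α * s = 0 := hcoeff 2
  have hβs : β * s = 0 := hcoeff 3
  rcases not_and_or.mp hst with hs | ht
  · exact ⟨(mul_eq_zero.mp hαs).resolve_right hs, (mul_eq_zero.mp hβs).resolve_right hs⟩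
  · exact ⟨(mul_eq_zero.mp hαt).resolve_right ht, (mul_eq_zero.mp hβt).resolve_right ht⟩

theorem Submodule.span_pair_inf_prod_ne_bot_iff (h : LinearIndependent K ![a, b, c, d])
    {W : Submodule K V} (hW : Module.finrank K W = 2) :
    Submodule.span K {(a, b), (c, d)} ⊓ W.prod W ≠ ⊥ ↔
      ∃ s t : K, ¬(s = 0 ∧ t = 0) ∧ W = Submodule.span K {t • a + s • c, t • b + s • d} := by
  rw [Submodule.span_pair_inf_ne_bot_iff]
  refine exists₂_congr fun s t => ?_
  by_cases hst : s = 0 ∧ t = 0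
  · simp [hst]
  have hind := h.pair_add_smul_add_smul hst
  have hne : t • (a, b) + s • (c, d) ≠ 0 := fun h0 => hind.ne_zero 0 (congrArg Prod.fst h0)
  rw [Submodule.eq_span_pair_iff_of_finrank_eq_two hind hW]
  exact ⟨fun ⟨_, hmem⟩ => ⟨hst, Submodule.mem_prod.mp hmem⟩,
    fun ⟨_, hmem⟩ => ⟨hne, Submodule.mem_prod.mpr hmem⟩⟩

end Field

section Scroll

variable {k : Type*} [Field k]

noncomputable def scrollPoint (s t : k) : ExteriorAlgebra k (Fin 5 → k) :=
  ι k (t • Pi.basisFun k (Fin 5) 1 + s • Pi.basisFun k (Fin 5) 3) *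
    ι k (t • Pi.basisFun k (Fin 5) 2 + s • Pi.basisFun k (Fin 5) 4)

theorem wedgePairing_proj_scrollPoint (s t : k) :
    wedgePairing (.proj 1) (.proj 2) (scrollPoint s t) = t ^ 2 ∧
      wedgePairing (.proj 1) (.proj 4) (scrollPoint s t) = t * s ∧
      wedgePairing (.proj 3) (.proj 4) (scrollPoint s t) = s ^ 2 := by
  simp only [scrollPoint, wedgePairing_ι_mul_ι]
  simp [sq]

theorem scrollPoint_ne_zero {s t : k} (hst : ¬(s = 0 ∧ t = 0)) : scrollPoint s t ≠ 0 := by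
  intro h0
  obtain ⟨ht, -, hs⟩ := wedgePairing_proj_scrollPoint s t
  rw [h0, map_zero] at ht hs
  exact hst ⟨pow_eq_zero_iff two_ne_zero |>.mp hs.symm,
    pow_eq_zero_iff two_ne_zero |>.mp ht.symm⟩

theorem mul_eq_mul_of_scrollPoint_eq_smul {s t s' t' c : k}
    (h : scrollPoint s' t' = c • scrollPoint s t) : s' * t = s * t' := by
  obtain ⟨htt, hts, hss⟩ := wedgePairing_proj_scrollPoint s t
  obtain ⟨htt', hts', hss'⟩ := wedgePairing_proj_scrollPoint s' t'
  have hsq : (s' * t - s * t') ^ 2 = 0 := by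
    simp only [h, map_smul, smul_eq_mul, htt, hts, hss] at htt' hts' hss'
    linear_combination 2 * s * t * hts' - t ^ 2 * hss' - s ^ 2 * htt'
  exact sub_eq_zero.mp (pow_eq_zero_iff two_ne_zero |>.mp hsq)

end Scroll

theorem scroll_lines_and_conic_general
    {k : Type} [Field k] :
    let e : Fin 5 → (Fin 5 → k) := fun i => Pi.basisFun k (Fin 5) i
    (∀ W : Submodule k (Fin 5 → k), Module.finrank k W = 2 →
      ((Submodule.span k {((e 1, e 2) : (Fin 5 → k) × (Fin 5 → k)), (e 3, e 4)} ⊓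
          W.prod W ≠ ⊥) ↔
        ∃ s t : k, ¬(s = 0 ∧ t = 0) ∧
          W = Submodule.span k {t • e 1 + s • e 3, t • e 2 + s • e 4})) ∧
    (∀ s t : k, ¬(s = 0 ∧ t = 0) →
      ι k (t • e 1 + s • e 3) * ι k (t • e 2 + s • e 4) ≠ 0) ∧
    (∀ s t s' t' : k, ¬(s = 0 ∧ t = 0) → ¬(s' = 0 ∧ t' = 0) →
      (∃ c : k, c ≠ 0 ∧
        ι k (t' • e 1 + s' • e 3) * ι k (t' • e 2 + s' • e 4) =
          c • (ι k (t • e 1 + s • e 3) * ι k (t • e 2 + s • e 4))) →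
      s' * t = s * t') := by
  intro e
  have he : LinearIndependent k ![e 1, e 2, e 3, e 4] := by
    convert (Pi.basisFun k (Fin 5)).linearIndependent.comp ![1, 2, 3, 4] (by decide) using 1
    ext i : 1
    fin_cases i <;> rfl
  exact ⟨fun W hW => Submodule.span_pair_inf_prod_ne_bot_iff he hW,
    fun s t => scrollPoint_ne_zero,
    fun s t s' t' _ _ ⟨_, _, h⟩ => mul_eq_mul_of_scrollPoint_eq_smul h⟩

theorem scroll_lines_and_conic
    {k : Type} [Field k] [IsAlgClosed k] [CharZero k] :
    let e : Fin 5 → (Fin 5 → k) := fun i => Pi.basisFun k (Fin 5) i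
    (∀ W : Submodule k (Fin 5 → k), Module.finrank k W = 2 →
      ((Submodule.span k {((e 1, e 2) : (Fin 5 → k) × (Fin 5 → k)), (e 3, e 4)} ⊓
          W.prod W ≠ ⊥) ↔
        ∃ s t : k, ¬(s = 0 ∧ t = 0) ∧
          W = Submodule.span k {t • e 1 + s • e 3, t • e 2 + s • e 4})) ∧
    (∀ s t : k, ¬(s = 0 ∧ t = 0) →
      ι k (t • e 1 + s • e 3) * ι k (t • e 2 + s • e 4) ≠ 0) ∧
    (∀ s t s' t' : k, ¬(s = 0 ∧ t = 0) → ¬(s' = 0 ∧ t' = 0) →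
      (∃ c : k, c ≠ 0 ∧
        ι k (t' • e 1 + s' • e 3) * ι k (t' • e 2 + s' • e 4) =
          c • (ι k (t • e 1 + s • e 3) * ι k (t • e 2 + s • e 4))) →
      s' * t = s * t') :=
  scroll_lines_and_conic_general
end
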